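/- arXiv:1211.3938 — 5 statements merged into one kernel-verified Lean document; each statement's English description precedes it below -/
import Mathlib

section
/- For the Hankel structure H_{m,n} with identity weight W = I_{m+n−1}, the blocks of V = M_S M_Sᵀ are V^{(i,j)} = (Z_mᵀ)^{j−i} for j ≥ i and V^{(i,j)} = (V^{(j,i)})ᵀ for j < i, where Z_m is the m×m upper shift matrix; in particular V^{(i,j)} = 0 whenever |i−j| ≥ m, so V is m-block-banded and block-Toeplitz. -/
open Matrix

/-- The `m × m` upper shift matrix `Z_m`. -/
def shiftMat (m : ℕ) : Matrix (Fin m) (Fin m) ℝ :=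
  Matrix.of fun i j => if (j : ℕ) = (i : ℕ) + 1 then 1 else 0

lemma shiftMat_pow (m k : ℕ) (a b : Fin m) :
    (shiftMat m ^ k) a b = if (b : ℕ) = (a : ℕ) + k then 1 else 0 := by
  induction k generalizing a b with
  | zero => simp [pow_zero, one_apply, Fin.ext_iff, eq_comm]
  | succ k ih =>
    rw [pow_succ, mul_apply]
    simp only [ih]
    simp only [shiftMat, of_apply]
    by_cases hb : (b : ℕ) = (a : ℕ) + k + 1
    · have hk : (a : ℕ) + k < m := by omega
      rw [Finset.sum_eq_single (⟨(a : ℕ) + k, hk⟩ : Fin m)]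
      · simp [hb, Nat.add_assoc]
      · intro c _ hc
        have : (c : ℕ) ≠ (a : ℕ) + k := by simpa [Fin.ext_iff] using hc
        simp [this]
      · intro h; exact absurd (Finset.mem_univ _) h
    · rw [if_neg (show ¬ (b : ℕ) = (a : ℕ) + (k + 1) by omega)]
      apply Finset.sum_eq_zero
      intro c _
      by_cases h1 : (c : ℕ) = (a : ℕ) + k
      · have : (b : ℕ) ≠ (c : ℕ) + 1 := by omega
        simp [this]
      · simp [h1]

/-- For the Hankel structure with identity weight, the blocks of
`V = M_S M_Sᵀ` are `V^{(i,j)} = (Z_mᵀ)^{j−i}` for `j ≥ i`, `V^{(i,j)} = (V^{(j,i)})ᵀ`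
for `j < i`, and `V^{(i,j)} = 0` for `|i−j| ≥ m`; so `V` is `m`-block-banded and
block-Toeplitz. -/
theorem stmt_7 (m n : ℕ)
    (MS : Matrix (Fin n × Fin m) (Fin (m + n - 1)) ℝ)
    (hMS : ∀ (j : Fin n) (i : Fin m) (k : Fin (m + n - 1)),
      MS (j, i) k = if (i : ℕ) + (j : ℕ) = (k : ℕ) then 1 else 0)
    (V : Matrix (Fin n × Fin m) (Fin n × Fin m) ℝ)
    (hV : V = MS * MSᵀ) :
    (∀ (i j : Fin n), i ≤ j → ∀ (a b : Fin m),
      V (i, a) (j, b) = (((shiftMat m)ᵀ) ^ ((j : ℕ) - (i : ℕ))) a b) ∧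
    (∀ (i j : Fin n), j < i → ∀ (a b : Fin m),
      V (i, a) (j, b) = V (j, b) (i, a)) ∧
    (∀ (i j : Fin n), m ≤ (((i : ℕ) : ℤ) - ((j : ℕ) : ℤ)).natAbs →
      ∀ (a b : Fin m), V (i, a) (j, b) = 0) := by
  have hVentry : ∀ (i j : Fin n) (a b : Fin m),
      V (i, a) (j, b) = if (a : ℕ) + (i : ℕ) = (b : ℕ) + (j : ℕ) then 1 else 0 := by
    intro i j a b
    rw [hV, mul_apply]
    simp only [transpose_apply, hMS]
    have hk : (a : ℕ) + (i : ℕ) < m + n - 1 := by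
      have := a.isLt; have := i.isLt; omega
    rw [Finset.sum_eq_single (⟨(a : ℕ) + (i : ℕ), hk⟩ : Fin (m + n - 1))]
    · by_cases h : (a : ℕ) + (i : ℕ) = (b : ℕ) + (j : ℕ)
      · simp [h.symm]
      · simp [h]; omega
    · intro c _ hc
      have : (a : ℕ) + (i : ℕ) ≠ (c : ℕ) := fun he => hc (Fin.ext he.symm)
      simp [this]
    · intro h; exact absurd (Finset.mem_univ _) h
  refine ⟨?_, ?_, ?_⟩
  · intro i j hij a b
    have hij' : (i : ℕ) ≤ (j : ℕ) := hij
    have : ((shiftMat m)ᵀ) ^ ((j : ℕ) - (i : ℕ)) = ((shiftMat m) ^ ((j : ℕ) - (i : ℕ)))ᵀ :=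
      (transpose_pow _ _).symm
    rw [hVentry, this, transpose_apply, shiftMat_pow]
    by_cases h : (a : ℕ) + (i : ℕ) = (b : ℕ) + (j : ℕ)
    · rw [if_pos h, if_pos (by omega)]
    · rw [if_neg h, if_neg (by omega)]
  · intro i j _ a b
    rw [hVentry, hVentry]
    by_cases h : (a : ℕ) + (i : ℕ) = (b : ℕ) + (j : ℕ)
    · rw [if_pos h, if_pos (by omega)]
    · rw [if_neg h, if_neg (by omega)]
  · intro i j hij a b
    rw [hVentry, if_neg]
    have := a.isLt; have := b.isLt
    omega
end

section
/- If W ∈ ℝ^{n_p×n_p} is symmetric positive definite and W^{−1} is b-banded (i.e., (W^{−1})_{i,j} = 0 for |i−j| ≥ b), then for the Hankel structure H_{m,n}, the matrix V = M_S W^{−1} M_Sᵀ is (m+b−1)-block-banded: V^{(i,j)} = 0 whenever |i−j| ≥ m+b−1, and consequently Γ(R) = (I_n ⊗ R) V (I_n ⊗ Rᵀ) is (m+b−1)-block-banded (with d×d blocks) for every R ∈ ℝ^{d×m}. -/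
open Matrix
open scoped Kronecker

/-- If `W` is positive definite and `W⁻¹` is `b`-banded, then for the
Hankel structure `H_{m,n}` the matrix `V = M_S W⁻¹ M_Sᵀ` is `(m+b−1)`-block-banded,
and hence `Γ(R) = (Iₙ ⊗ R) V (Iₙ ⊗ Rᵀ)` is `(m+b−1)`-block-banded for every `R`. -/
theorem stmt_8 (m n b : ℕ)
    (MS : Matrix (Fin n × Fin m) (Fin (m + n - 1)) ℝ)
    (hMS : ∀ (j : Fin n) (i : Fin m) (k : Fin (m + n - 1)),
      MS (j, i) k = if (i : ℕ) + (j : ℕ) = (k : ℕ) then 1 else 0)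
    (W : Matrix (Fin (m + n - 1)) (Fin (m + n - 1)) ℝ) (hW : W.PosDef)
    (hband : ∀ i j : Fin (m + n - 1),
      b ≤ (((i : ℕ) : ℤ) - ((j : ℕ) : ℤ)).natAbs → W⁻¹ i j = 0) :
    (∀ (i j : Fin n), m + b - 1 ≤ (((i : ℕ) : ℤ) - ((j : ℕ) : ℤ)).natAbs →
      ∀ (a b' : Fin m), (MS * W⁻¹ * MSᵀ) (i, a) (j, b') = 0) ∧
    (∀ (d : ℕ) (R : Matrix (Fin d) (Fin m) ℝ) (i j : Fin n),
      m + b - 1 ≤ (((i : ℕ) : ℤ) - ((j : ℕ) : ℤ)).natAbs →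
      ∀ (a b' : Fin d),
        (((1 : Matrix (Fin n) (Fin n) ℝ) ⊗ₖ R) * (MS * W⁻¹ * MSᵀ)
          * ((1 : Matrix (Fin n) (Fin n) ℝ) ⊗ₖ Rᵀ)) (i, a) (j, b') = 0) := by
  have key : ∀ (i j : Fin n), m + b - 1 ≤ (((i : ℕ) : ℤ) - ((j : ℕ) : ℤ)).natAbs →
      ∀ (a b' : Fin m), (MS * W⁻¹ * MSᵀ) (i, a) (j, b') = 0 := by
    intro i j hij a b'
    have ha2 := a.2; have hi2 := i.2; have hb2 := b'.2; have hj2 := j.2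
    have ha : (a : ℕ) + (i : ℕ) < m + n - 1 := by omega
    have hb : (b' : ℕ) + (j : ℕ) < m + n - 1 := by omega
    have hMSa : ∀ k : Fin (m + n - 1),
        MS (i, a) k = if k = ⟨(a : ℕ) + (i : ℕ), ha⟩ then 1 else 0 := by
      intro k
      rw [hMS]
      congr 1
      simp [Fin.ext_iff, eq_comm]
    have hMSb : ∀ k : Fin (m + n - 1),
        MS (j, b') k = if k = ⟨(b' : ℕ) + (j : ℕ), hb⟩ then 1 else 0 := by
      intro k
      rw [hMS]
      congr 1
      simp [Fin.ext_iff, eq_comm]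
    have : (MS * W⁻¹ * MSᵀ) (i, a) (j, b')
        = W⁻¹ ⟨(a : ℕ) + (i : ℕ), ha⟩ ⟨(b' : ℕ) + (j : ℕ), hb⟩ := by
      simp [Matrix.mul_apply, Matrix.transpose_apply, hMSa, hMSb, ite_mul,
        Finset.sum_ite_eq, Finset.sum_ite_eq']
    rw [this]
    apply hband
    simp only []
    omega
  refine ⟨key, ?_⟩
  intro d R i j hij a b'
  have hV := key i j hij
  set V := MS * W⁻¹ * MSᵀ with hVdef
  simp only [Matrix.mul_apply, Matrix.kroneckerMap_apply, Matrix.transpose_apply,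
    Matrix.one_apply, Fintype.sum_prod_type, ite_mul, mul_ite, one_mul, zero_mul,
    mul_zero, mul_one, Finset.sum_ite_eq, Finset.sum_ite_eq', Finset.sum_ite_irrel,
    Finset.sum_const_zero, Finset.mem_univ, if_true]
  simp [hV]
end

section
/- Let p ∈ ℝ^{n_p}, m ≤ n_p, and r < min(m, n_p−m+1). Then rank H_{m, n_p−m+1}(p) ≤ r if and only if rank H_{r+1, n_p−r}(p) ≤ r. -/
open Matrix Set Submodule Module

noncomputable section
namespace HR

def Hk (q : ℕ → ℝ) (s t : ℕ) : Matrix (Fin s) (Fin t) ℝ :=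
  Matrix.of fun i j => q (i.1 + j.1)

lemma Hk_transpose (q : ℕ → ℝ) (s t : ℕ) : (Hk q s t)ᵀ = Hk q t s := by
  ext i j
  simp [Hk, Matrix.transpose_apply, Nat.add_comm]

lemma rank_Hk_comm (q : ℕ → ℝ) (s t : ℕ) : (Hk q s t).rank = (Hk q t s).rank := by
  rw [← Hk_transpose q s t, Matrix.rank_transpose]

def Arow (q : ℕ → ℝ) (t l : ℕ) : Fin t → ℝ := fun j => q (l + j.1)

lemma rank_Hk_eq (q : ℕ → ℝ) (s t : ℕ) :
    (Hk q s t).rank = finrank ℝ (span ℝ (Set.range fun i : Fin s => Arow q t i.1)) := by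
  rw [Matrix.rank_eq_finrank_span_row]; rfl

variable {V : Type*} [AddCommGroup V] [Module ℝ V]

lemma li_of_not_mem (v : ℕ → V) :
    ∀ k : ℕ, (∀ l < k, v l ∉ span ℝ (Set.range fun i : Fin l => v i.1)) →
      LinearIndependent ℝ (fun i : Fin k => v i.1) := by
  intro k
  induction k with
  | zero => intro _; exact linearIndependent_empty_type
  | succ k ih =>
    intro h
    have hs : (fun i : Fin (k+1) => v i.1) = Fin.snoc (fun i : Fin k => v i.1) (v k) := by
      funext i
      refine Fin.lastCases ?_ ?_ i
      · simp [Fin.snoc_last]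
      · intro i; simp [Fin.snoc_castSucc]
    rw [hs, linearIndependent_fin_snoc]
    exact ⟨ih (fun l hl => h l (Nat.lt_succ_of_lt hl)), h k (Nat.lt_succ_self k)⟩

lemma exists_dep (v : ℕ → V) (n : ℕ)
    (h : ¬ LinearIndependent ℝ (fun i : Fin n => v i.1)) :
    ∃ l, l < n ∧ v l ∈ span ℝ (Set.range fun i : Fin l => v i.1) := by
  by_contra hc
  push_neg at hc
  exact h (li_of_not_mem v n hc)

lemma not_li_of_finrank {W : Type*} [AddCommGroup W] [Module ℝ W] [FiniteDimensional ℝ W]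
    {n : ℕ} (f : Fin n → W) (S : Submodule ℝ W) (hf : ∀ i, f i ∈ S)
    (h : finrank ℝ S < n) : ¬ LinearIndependent ℝ f := by
  intro hli
  have h1 : span ℝ (Set.range f) ≤ S := span_le.mpr (range_subset_iff.mpr hf)
  have h2 := finrank_span_eq_card hli
  have h3 := Submodule.finrank_mono h1
  rw [h2, Fintype.card_fin] at h3
  omega

lemma span_rows_le (A : ℕ → V) (k : ℕ) (c : Fin k → ℝ) (s L : ℕ)
    (G : Set V) (hG1 : ∀ l, l ≤ s → l < k → A l ∈ G) (hG2 : ∀ l, l ≤ s → L < l → A l ∈ G)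
    (hrec : ∀ l, k ≤ l → l ≤ L → l ≤ s → A l = ∑ i : Fin k, c i • A (l - k + i.1)) :
    ∀ l ≤ s, A l ∈ span ℝ G := by
  intro l
  induction l using Nat.strong_induction_on with
  | _ l ih =>
    intro hls
    by_cases h1 : l < k
    · exact subset_span (hG1 l hls h1)
    by_cases h2 : L < l
    · exact subset_span (hG2 l hls h2)
    push_neg at h1 h2
    rw [hrec l h1 h2 hls]
    refine Submodule.sum_mem _ (fun i _ => Submodule.smul_mem _ _ ?_)
    have hik := i.2
    exact ih (l - k + i.1) (by omega) (by omega)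

theorem core (q : ℕ → ℝ) (r s t : ℕ) (hs : r < s) (ht : r < t)
    (h : (Hk q s (t+1)).rank ≤ r) : (Hk q (s+1) t).rank ≤ r := by
  classical
  rw [rank_Hk_eq] at h ⊢
  set RS : Submodule ℝ (Fin (t+1) → ℝ) :=
    span ℝ (Set.range fun i : Fin s => Arow q (t+1) i.1) with hRS
  have hmemRS : ∀ l, l < s → Arow q (t+1) l ∈ RS := fun l hl => subset_span ⟨⟨l, hl⟩, rfl⟩
  -- first dependent row index k
  have hnli : ¬ LinearIndependent ℝ (fun i : Fin (r+1) => Arow q (t+1) i.1) := by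
    refine not_li_of_finrank _ RS (fun i => hmemRS i.1 (by have := i.2; omega)) (by omega)
  obtain ⟨l0, hl0n, hl0mem⟩ := exists_dep (Arow q (t+1)) (r+1) hnli
  have hex : ∃ l, Arow q (t+1) l ∈ span ℝ (Set.range fun i : Fin l => Arow q (t+1) i.1) :=
    ⟨l0, hl0mem⟩
  set k := Nat.find hex with hkdef
  have hkmem := Nat.find_spec hex
  have hkmin : ∀ l < k, Arow q (t+1) l ∉ span ℝ (Set.range fun i : Fin l => Arow q (t+1) i.1) :=
    fun l hl => Nat.find_min hex hl
  have hkr : k ≤ r := le_trans (Nat.find_min' hex hl0mem) (by omega)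
  have hkli : LinearIndependent ℝ (fun i : Fin k => Arow q (t+1) i.1) := li_of_not_mem _ k hkmin
  obtain ⟨c, hc⟩ := (mem_span_range_iff_exists_fun ℝ).mp hkmem
  set d : ℕ → ℝ := fun u => q (k + u) - ∑ i : Fin k, c i * q (i.1 + u) with hd
  have hd0 : ∀ u, u < t + 1 → d u = 0 := by
    intro u hu
    have h1 := congrFun hc ⟨u, hu⟩
    simp only [Finset.sum_apply, Pi.smul_apply, Arow, smul_eq_mul] at h1
    show q (k + u) - ∑ i : Fin k, c i * q (i.1 + u) = 0
    rw [sub_eq_zero]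
    exact h1.symm
  -- reduction of short rows when defects vanish
  have hrec : ∀ l, k ≤ l → (∀ j : Fin t, d (l - k + j.1) = 0) →
      Arow q t l = ∑ i : Fin k, c i • Arow q t (l - k + i.1) := by
    intro l hkl hz
    funext j
    have h1 := hz j
    rw [hd] at h1
    simp only at h1
    have e1 : k + (l - k + j.1) = l + j.1 := by omega
    rw [e1, sub_eq_zero] at h1
    simp only [Finset.sum_apply, Pi.smul_apply, Arow, smul_eq_mul]
    rw [h1]
    refine Finset.sum_congr rfl (fun i _ => ?_)
    congr 1
    exact congrArg q (by omega)

  by_cases hbrk : ∃ u, d u ≠ 0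
  · -- there is a defect; e = first defect position
    have hde := Nat.find_spec hbrk
    set e := Nat.find hbrk with hedef
    have hemin : ∀ u, u < e → d u = 0 := fun u hu => of_not_not (Nat.find_min hbrk hu)
    have het : t + 1 ≤ e := by
      by_contra hcon
      exact hde (hd0 e (by omega))
    by_cases hgood : s + t - r ≤ e
    · -- the new matrix still has rank ≤ r : span by k + (s - L) rows
      set L := e + k - t with hL
      set W : (Fin k ⊕ Fin (s - L)) → (Fin t → ℝ) :=
        Sum.elim (fun i : Fin k => Arow q t i.1) (fun j : Fin (s - L) => Arow q t (s - j.1))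
        with hW
      have hGall : ∀ l, l ≤ s → Arow q t l ∈ span ℝ (Set.range W) := by
        refine span_rows_le (Arow q t) k c s L _ ?_ ?_ ?_
        · intro l _ hlk
          exact ⟨Sum.inl ⟨l, hlk⟩, rfl⟩
        · intro l hls hLl
          refine ⟨Sum.inr ⟨s - l, by omega⟩, ?_⟩
          simp only [hW, Sum.elim_inr]
          exact congrArg (Arow q t) (by omega)
        · intro l hkl hlL _
          refine hrec l hkl (fun j => hemin _ ?_)
          have := j.2
          omega
      have hle : span ℝ (Set.range fun i : Fin (s+1) => Arow q t i.1) ≤ span ℝ (Set.range W) :=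
        span_le.mpr (range_subset_iff.mpr (fun i => hGall i.1 (by have := i.2; omega)))
      have h2 := Submodule.finrank_mono hle
      have h3 : finrank ℝ (span ℝ (Set.range W)) ≤ k + (s - L) := by
        simpa [Set.finrank] using finrank_range_le_card W
      omega
    · -- contradiction : we can exhibit r+1 independent rows in the old row space
      exfalso
      set M := min e (s - 1) with hM
      have hM1 : r < M := by omega
      have hMe : M ≤ e := by omega
      have hMs : M ≤ s - 1 := by omega
      set F : (Fin k ⊕ Fin (r + 1 - k)) → (Fin (t+1) → ℝ) :=
        Sum.elim (fun i : Fin k => Arow q (t+1) i.1)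
          (fun j : Fin (r + 1 - k) => Arow q (t+1) (M - j.1)) with hF
      have hFmem : ∀ x, F x ∈ RS := by
        intro x
        rcases x with i | j
        · exact hmemRS i.1 (by have := i.2; omega)
        · exact hmemRS (M - j.1) (by omega)
      have hFli : LinearIndependent ℝ F := by
        rw [Fintype.linearIndependent_iff]
        intro g hg
        rw [Fintype.sum_sum_type] at hg
        simp only [hF, Sum.elim_inl, Sum.elim_inr] at hg
        have key : ∀ j' : ℕ, k + j' ≤ t →
            (∑ jj : Fin (r + 1 - k), g (Sum.inr jj) * d (M - jj.1 + j')) = 0 := by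
          intro j' hj'
          set φ : (Fin (t+1) → ℝ) →ₗ[ℝ] ℝ :=
            LinearMap.proj (⟨k + j', by omega⟩ : Fin (t+1)) -
              ∑ i' : Fin k, c i' • LinearMap.proj (⟨i'.1 + j', by have := i'.2; omega⟩ : Fin (t+1))
            with hφ
          have hφA : ∀ l : ℕ, φ (Arow q (t+1) l) = d (l + j') := by
            intro l
            rw [hφ]
            simp only [LinearMap.sub_apply, LinearMap.sum_apply, LinearMap.smul_apply,
              LinearMap.proj_apply, smul_eq_mul, hd]
            show q (l + (k + j')) - (∑ i' : Fin k, c i' * Arow q (t+1) l ⟨i'.1 + j', _⟩)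
                = q (k + (l + j')) - ∑ i' : Fin k, c i' * q (i'.1 + (l + j'))
            congr 1
            · exact congrArg q (by omega)
            · refine Finset.sum_congr rfl (fun i' _ => ?_)
              show c i' * q (l + (i'.1 + j')) = c i' * q (i'.1 + (l + j'))
              congr 1
              exact congrArg q (by omega)
          have h0 := congrArg φ hg
          rw [map_add, map_zero, map_sum, map_sum] at h0
          simp only [_root_.map_smul, smul_eq_mul, hφA] at h0
          have hz : ∀ i : Fin k, i ∈ Finset.univ → g (Sum.inl i) * d (i.1 + j') = 0 := by
            intro i _
            rw [hemin (i.1 + j') (by have := i.2; omega), mul_zero]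
          rw [Finset.sum_eq_zero hz, zero_add] at h0
          exact h0
        have hgr : ∀ n : ℕ, ∀ jj : Fin (r + 1 - k), jj.1 = n → g (Sum.inr jj) = 0 := by
          intro n
          induction n using Nat.strong_induction_on with
          | _ n ihn =>
            intro jj hjj
            have hjb := jj.2
            have hkey := key (e - M + n) (by omega)
            have hz2 : ∀ j2 : Fin (r + 1 - k), j2 ∈ Finset.univ → j2 ≠ jj →
                g (Sum.inr j2) * d (M - j2.1 + (e - M + n)) = 0 := by
              intro j2 _ hne
              have hj2b := j2.2
              rcases Nat.lt_or_ge j2.1 n with h' | h'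
              · rw [ihn j2.1 h' j2 rfl, zero_mul]
              · have hgt : n < j2.1 := by
                  rcases Nat.eq_or_lt_of_le h' with he' | hlt
                  · exact absurd (Fin.ext (he'.symm.trans hjj.symm ▸ rfl : j2.1 = jj.1)) hne
                  · exact hlt
                rw [hemin (M - j2.1 + (e - M + n)) (by omega), mul_zero]
            have hsingle := Finset.sum_eq_single jj hz2 (by simp)
            rw [hsingle] at hkey
            have harg : M - jj.1 + (e - M + n) = e := by omega
            rw [harg] at hkey
            exact (mul_eq_zero.mp hkey).resolve_right hde
        have hg2 : ∑ i : Fin k, g (Sum.inl i) • Arow q (t+1) i.1 = 0 := by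
          have hz3 : (∑ jj : Fin (r + 1 - k), g (Sum.inr jj) • Arow q (t+1) (M - jj.1)) = 0 :=
            Finset.sum_eq_zero (fun jj _ => by rw [hgr jj.1 jj rfl, zero_smul])
          rw [hz3, add_zero] at hg
          exact hg
        have hzl := Fintype.linearIndependent_iff.mp hkli (fun i => g (Sum.inl i)) hg2
        intro x
        rcases x with i | jj
        · exact hzl i
        · exact hgr jj.1 jj rfl
      have hle2 : span ℝ (Set.range F) ≤ RS := span_le.mpr (range_subset_iff.mpr hFmem)
      have hfr := Submodule.finrank_mono hle2
      rw [finrank_span_eq_card hFli] at hfr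
      simp only [Fintype.card_sum, Fintype.card_fin] at hfr
      omega
  · -- no defect at all : rank ≤ k
    push_neg at hbrk
    have hGall : ∀ l, l ≤ s → Arow q t l ∈ span ℝ (Set.range fun i : Fin k => Arow q t i.1) := by
      refine span_rows_le (Arow q t) k c s s _ (fun l _ hl => ⟨⟨l, hl⟩, rfl⟩)
        (fun l hl hl2 => absurd hl (by omega)) ?_
      intro l hkl _ _
      exact hrec l hkl (fun j => hbrk _)
    have hle : span ℝ (Set.range fun i : Fin (s+1) => Arow q t i.1) ≤
        span ℝ (Set.range fun i : Fin k => Arow q t i.1) :=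
      span_le.mpr (range_subset_iff.mpr (fun i => hGall i.1 (by have := i.2; omega)))
    have h2 := Submodule.finrank_mono hle
    have h3 : finrank ℝ (span ℝ (Set.range fun i : Fin k => Arow q t i.1)) ≤ k := by
      simpa [Set.finrank] using finrank_range_le_card (fun i : Fin k => Arow q t i.1)
    omega

theorem up_iff (q : ℕ → ℝ) (r s t : ℕ) (hs : r < s) (ht : r < t) :
    (Hk q s (t+1)).rank ≤ r ↔ (Hk q (s+1) t).rank ≤ r := by
  constructor
  · exact core q r s t hs ht
  · intro h
    rw [rank_Hk_comm] at h
    have := core q r t s ht hs h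
    rwa [rank_Hk_comm] at this

theorem chain (q : ℕ → ℝ) (r : ℕ) :
    ∀ (j s t : ℕ), r < s → r < t →
      ((Hk q s (t+j)).rank ≤ r ↔ (Hk q (s+j) t).rank ≤ r) := by
  intro j
  induction j with
  | zero => intro s t _ _; exact Iff.rfl
  | succ j ih =>
    intro s t hs ht
    have h1 : t + (j+1) = (t+1) + j := by omega
    rw [h1, ih s (t+1) hs (by omega)]
    have h3 : s + (j+1) = (s+j) + 1 := by omega
    rw [h3]
    exact up_iff q r (s+j) t (by omega) ht

end HR

/-- (Heinig–Rost) For `p ∈ ℝ^{n_p}`, `m ≤ n_p` and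
`r < min(m, n_p − m + 1)`, `rank H_{m, n_p−m+1}(p) ≤ r` iff
`rank H_{r+1, n_p−r}(p) ≤ r`. -/
theorem stmt_11 (np m r : ℕ) (hm : m ≤ np) (hr : r < m) (hr2 : r < np - m + 1)
    (p : Fin np → ℝ) :
    (Matrix.of fun (i : Fin m) (j : Fin (np - m + 1)) =>
        p ⟨i.1 + j.1, by omega⟩).rank ≤ r ↔
    (Matrix.of fun (i : Fin (r + 1)) (j : Fin (np - r)) =>
        p ⟨i.1 + j.1, by omega⟩).rank ≤ r := by
  classical
  set q : ℕ → ℝ := fun u => if h : u < np then p ⟨u, h⟩ else 0 with hq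
  have hA : (Matrix.of fun (i : Fin m) (j : Fin (np - m + 1)) =>
      p ⟨i.1 + j.1, by omega⟩) = HR.Hk q m (np - m + 1) := by
    ext i j
    have hi := i.2; have hj := j.2
    have hij : i.1 + j.1 < np := by omega
    simp only [Matrix.of_apply, HR.Hk, hq]
    rw [dif_pos hij]
  have hB : (Matrix.of fun (i : Fin (r + 1)) (j : Fin (np - r)) =>
      p ⟨i.1 + j.1, by omega⟩) = HR.Hk q (r + 1) (np - r) := by
    ext i j
    have hi := i.2; have hj := j.2
    have hij : i.1 + j.1 < np := by omega
    simp only [Matrix.of_apply, HR.Hk, hq]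
    rw [dif_pos hij]
  rw [hA, hB]
  have hchain := HR.chain q r (m - (r+1)) (r+1) (np - m + 1) (by omega) (by omega)
  have e1 : (np - m + 1) + (m - (r+1)) = np - r := by omega
  have e2 : (r+1) + (m - (r+1)) = m := by omega
  rw [e1, e2] at hchain
  exact hchain.symm
end
end

section
/- Let d ≤ q and consider the mosaic Hankel structure H_{m,n} with m = (m₁, …, m₁) (q equal row blocks) and one column block of width n, with identity weight. Then there exists a permutation matrix Π ∈ ℝ^{qm₁ × qm₁} such that for every X ∈ ℝ^{d×(qm₁−d)}, the matrix G(R) = (I_n ⊗ R) M_S with R = [X I_d] Π has full row rank nd. -/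
open Matrix

/-- Any two injections from a finite type into a finite type are related by a
permutation of the codomain. -/
lemma exists_perm_comp_eq {α β : Type*} [Fintype α] [DecidableEq α] [Fintype β]
    (f g : β → α) (hf : Function.Injective f) (hg : Function.Injective g) :
    ∃ τ : Equiv.Perm α, ∀ b, τ (f b) = g b := by
  classical
  let e₁ : {a // a ∈ Set.range f} ≃ {a // a ∈ Set.range g} :=
    (Equiv.ofInjective f hf).symm.trans (Equiv.ofInjective g hg)
  have hcard : Fintype.card {a // ¬ a ∈ Set.range f} =
      Fintype.card {a // ¬ a ∈ Set.range g} := by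
    rw [Fintype.card_subtype_compl, Fintype.card_subtype_compl]
    congr 1
    exact Fintype.card_congr e₁
  let e₂ : {a // ¬ a ∈ Set.range f} ≃ {a // ¬ a ∈ Set.range g} :=
    Fintype.equivOfCardEq hcard
  refine ⟨(Equiv.sumCompl (· ∈ Set.range f)).symm.trans
    ((Equiv.sumCongr e₁ e₂).trans (Equiv.sumCompl (· ∈ Set.range g))), fun b => ?_⟩
  have h1 : (Equiv.sumCompl (· ∈ Set.range f)).symm (f b) = Sum.inl ⟨f b, ⟨b, rfl⟩⟩ :=
    Equiv.sumCompl_symm_apply_of_pos ⟨b, rfl⟩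
  simp only [Equiv.trans_apply, h1, Equiv.sumCongr_apply, Sum.map_inl,
    Equiv.sumCompl_apply_inl]
  have : e₁ ⟨f b, ⟨b, rfl⟩⟩ = ⟨g b, ⟨b, rfl⟩⟩ := by
    simp only [e₁, Equiv.trans_apply]
    have : (Equiv.ofInjective f hf).symm ⟨f b, ⟨b, rfl⟩⟩ = b :=
      Equiv.ofInjective_symm_apply hf b
    rw [this]
    rfl
  rw [this]

/-- For the mosaic Hankel structure with `q` equal row blocks of height
`m₁` and one column block of width `n`, identity weight, and `d ≤ q`, there is a
permutation `σ` of the rows such that for every `X ∈ ℝ^{d×(qm₁−d)}`, the matrix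
`G(R) = (Iₙ ⊗ R) M_S` with `R = [X I_d] Π` has full row rank `nd` (its rows are
linearly independent). Row `(j,i)` of `G(R)` has entry
`∑ₐ R i (k,a) ⋅ [a + j = t]` at parameter index `(k,t)`. -/
theorem stmt_13 (q m₁ n d : ℕ) (hm1 : 1 ≤ m₁) (hn : 1 ≤ n) (hd : d ≤ q) :
    ∃ σ : Equiv.Perm (Fin q × Fin m₁),
      ∀ X : Matrix (Fin d) (Fin (q * m₁ - d)) ℝ,
        LinearIndependent ℝ
          (fun (ji : Fin n × Fin d) =>
            fun (kt : Fin q × Fin (m₁ + n - 1)) =>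
              ∑ a : Fin m₁,
                (Matrix.fromCols X (1 : Matrix (Fin d) (Fin d) ℝ)) ji.2
                  (finSumFinEquiv.symm
                    (finCongr
                      (by
                        have h1 : d ≤ q * m₁ := hd.trans (Nat.le_mul_of_pos_right q hm1)
                        omega)
                      (finProdFinEquiv (σ (kt.1, a)))))
                * (if (a : ℕ) + (ji.1 : ℕ) = (kt.2 : ℕ) then (1 : ℝ) else 0)) := by
  classical
  have hqm : d ≤ q * m₁ := hd.trans (Nat.le_mul_of_pos_right q hm1)
  -- the two injections
  have hf1 : ∀ i : Fin d, (m₁ - 1) + m₁ * i < q * m₁ := by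
    intro i
    have : (i : ℕ) < q := lt_of_lt_of_le i.isLt hd
    calc (m₁ - 1) + m₁ * i < m₁ + m₁ * i := by omega
    _ = m₁ * (i + 1) := by ring
    _ ≤ m₁ * q := Nat.mul_le_mul_left _ (by omega)
    _ = q * m₁ := Nat.mul_comm _ _
  have hg1 : ∀ i : Fin d, (q * m₁ - d) + i < q * m₁ := by
    intro i; have := i.isLt; omega
  let f : Fin d → Fin (q * m₁) := fun i => ⟨(m₁ - 1) + m₁ * i, hf1 i⟩
  let g : Fin d → Fin (q * m₁) := fun i => ⟨(q * m₁ - d) + i, hg1 i⟩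
  have hf : Function.Injective f := by
    intro i i' h
    have h' : (m₁ - 1) + m₁ * i = (m₁ - 1) + m₁ * i' := congrArg Fin.val h
    have : m₁ * (i : ℕ) = m₁ * (i' : ℕ) := by omega
    exact Fin.ext (Nat.eq_of_mul_eq_mul_left (by omega) this)
  have hg : Function.Injective g := by
    intro i i' h
    have h' : (q * m₁ - d) + (i : ℕ) = (q * m₁ - d) + i' := congrArg Fin.val h
    exact Fin.ext (by omega)
  obtain ⟨τ, hτ⟩ := exists_perm_comp_eq f g hf hg
  refine ⟨(finProdFinEquiv.trans (τ.trans finProdFinEquiv.symm) :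
      (Fin q × Fin m₁) ≃ (Fin q × Fin m₁)), fun X => ?_⟩
  set σ : Equiv.Perm (Fin q × Fin m₁) :=
    (finProdFinEquiv.trans (τ.trans finProdFinEquiv.symm)) with hσ
  rw [Fintype.linearIndependent_iff]
  intro c hc
  -- the key echelon step
  have main : ∀ j : Fin n, (∀ j' : Fin n, (j : ℕ) < j' → ∀ i, c (j', i) = 0) →
      ∀ i₀ : Fin d, c (j, i₀) = 0 := by
    intro j hgt i₀
    have hk : (i₀ : ℕ) < q := lt_of_lt_of_le i₀.isLt hd
    have ht : m₁ - 1 + (j : ℕ) < m₁ + n - 1 := by have := j.isLt; omega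
    have h0 := congrFun hc (⟨(i₀ : ℕ), hk⟩, ⟨m₁ - 1 + j, ht⟩)
    rw [Finset.sum_apply] at h0
    -- compute the key index value
    have hidx : ∀ i : Fin d,
        (Matrix.fromCols X (1 : Matrix (Fin d) (Fin d) ℝ)) i
          (finSumFinEquiv.symm
            (finCongr (by omega)
              (finProdFinEquiv (σ ((⟨(i₀ : ℕ), hk⟩ : Fin q), (⟨m₁ - 1, by omega⟩ : Fin m₁))))))
          = if i = i₀ then 1 else 0 := by
      intro i
      have h1 : finProdFinEquiv (σ ((⟨(i₀ : ℕ), hk⟩ : Fin q), (⟨m₁ - 1, by omega⟩ : Fin m₁)))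
          = g i₀ := by
        have h2 : finProdFinEquiv ((⟨(i₀ : ℕ), hk⟩ : Fin q), (⟨m₁ - 1, by omega⟩ : Fin m₁))
            = f i₀ := by
          apply Fin.ext
          simp [finProdFinEquiv, f]
        simp only [hσ, Equiv.trans_apply, Equiv.apply_symm_apply]
        rw [h2, hτ]
      rw [h1]
      have h3 : finSumFinEquiv.symm
          ((finCongr (by omega) (g i₀)) : Fin ((q * m₁ - d) + d)) = Sum.inr i₀ := by
        rw [Equiv.symm_apply_eq]
        apply Fin.ext
        simp [g, finSumFinEquiv_apply_right]
      rw [h3, Matrix.fromCols_apply_inr]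
      simp [Matrix.one_apply]
    -- the total sum reduces to the single term (j, i₀)
    rw [Finset.sum_eq_single (j, i₀)] at h0
    · -- term at (j, i₀)
      simp only [Pi.smul_apply, smul_eq_mul] at h0
      rw [Finset.sum_eq_single (⟨m₁ - 1, by omega⟩ : Fin m₁)] at h0
      · rw [hidx i₀] at h0
        simpa using h0
      · intro a _ ha
        have hna : ¬ ((a : ℕ) = m₁ - 1) := fun h => ha (Fin.ext (show (a:ℕ) = _ from h))
        simp [hna]
      · intro h; exact absurd (Finset.mem_univ _) h
    · intro ji _ hne
      simp only [Pi.smul_apply, smul_eq_mul]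
      rcases lt_trichotomy ((ji.1 : ℕ)) ((j : ℕ)) with hlt | heq | hgt'
      · -- j' < j : inner sum vanishes
        have : (∑ a : Fin m₁,
            (Matrix.fromCols X (1 : Matrix (Fin d) (Fin d) ℝ)) ji.2
              (finSumFinEquiv.symm
                (finCongr (by omega)
                  (finProdFinEquiv (σ ((⟨(i₀ : ℕ), hk⟩ : Fin q), a)))))
              * (if (a : ℕ) + (ji.1 : ℕ) = ((⟨m₁ - 1 + j, ht⟩ : Fin (m₁ + n - 1)) : ℕ)
                  then (1 : ℝ) else 0)) = 0 := by
          apply Finset.sum_eq_zero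
          intro a _
          have ha2 : ¬ ((a : ℕ) + (ji.1 : ℕ) = m₁ - 1 + (j : ℕ)) := by
            have := a.isLt; omega
          simp [ha2]
        rw [this, mul_zero]
      · -- same j, different i
        have hij : ji = (j, ji.2) := Prod.ext (Fin.ext heq) rfl
        have hi2 : ji.2 ≠ i₀ := by
          intro h; exact hne (by rw [hij, h])
        rw [Finset.sum_eq_single (⟨m₁ - 1, by omega⟩ : Fin m₁)]
        · rw [heq, hidx ji.2]
          simp [hi2]
        · intro a _ ha
          have hna : ¬ ((a : ℕ) = m₁ - 1) := fun h => ha (Fin.ext (show (a:ℕ) = _ from h))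
          simp [heq, hna]
        · intro h; exact absurd (Finset.mem_univ _) h
      · -- j' > j : coefficient vanishes
        rw [hgt ji.1 hgt' ji.2, zero_mul]
    · intro h; exact absurd (Finset.mem_univ _) h
  -- downward induction
  have all : ∀ s : ℕ, ∀ j : Fin n, n ≤ (j : ℕ) + s → ∀ i, c (j, i) = 0 := by
    intro s
    induction s with
    | zero => intro j h; exact absurd h (by have := j.isLt; omega)
    | succ s ih =>
      intro j h i
      exact main j (fun j' hj' i' => ih j' (by omega) i') i
  intro ji
  exact (by rw [show ji = (ji.1, ji.2) from rfl]; exact all n ji.1 (by omega) ji.2)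
end

section
/- Let f(R) = s(R)ᵀ Γ(R)^{−1} s(R) where s(R) = vec(R S(p̂)) and Γ(R) = (I_n ⊗ R) V (I_n ⊗ Rᵀ) with V symmetric (V^{(i,j)} = (V^{(j,i)})ᵀ). Write y = Γ(R)^{−1} s(R) and let Y ∈ ℝ^{d×n} be the matrix with vec Y = y. Then the matrix gradient ∇f ∈ ℝ^{d×m} (defined by vec(∇f) being the gradient of f with respect to vec R) equals ∇f = 2 Y S(p̂)ᵀ − 2 ∑_{i,j=1}^{n} y_j y_iᵀ R V^{(i,j)}, where y_i ∈ ℝ^d is the i-th column of Y. -/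
open Matrix
open scoped Kronecker

section
variable {N : Type*} [Fintype N] [DecidableEq N]
attribute [local instance] Matrix.linftyOpNormedRing Matrix.linftyOpNormedAlgebra

theorem inv_deriv' (Γ D C : Matrix N N ℝ) (h : IsUnit Γ.det) :
    HasDerivAt (fun t : ℝ => Ring.inverse (Γ + t • D + (t * t) • C))
      (-(Γ⁻¹ * D * Γ⁻¹)) 0 := by
  haveI : CompleteSpace (Matrix N N ℝ) := FiniteDimensional.complete ℝ _
  obtain ⟨u, hu⟩ := (Matrix.isUnit_iff_isUnit_det Γ).2 h
  have hk : HasDerivAt (fun t : ℝ => Γ + t • D + (t * t) • C) D 0 := by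
    have h1 : HasDerivAt (fun t : ℝ => t • D) ((1:ℝ) • D) 0 :=
      (hasDerivAt_id 0).smul_const D
    have h2 : HasDerivAt (fun t : ℝ => (t * t) • C) ((0 * 1 + 1 * 0 : ℝ) • C) 0 := by
      have := ((hasDerivAt_id (0:ℝ)).fun_mul (hasDerivAt_id (0:ℝ))).smul_const C
      simp at this; simp; exact this
    have := ((hasDerivAt_const (0:ℝ) Γ).fun_add h1).fun_add h2
    simp at this; exact this
  have hF := hasFDerivAt_ringInverse (𝕜 := ℝ) u
  have hΓ : Γ = Γ + (0:ℝ) • D + ((0:ℝ) * 0) • C := by simp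
  rw [hu, hΓ] at hF
  have h2 := hF.comp_hasDerivAt 0 hk
  have huinv : (↑u⁻¹ : Matrix N N ℝ) = Γ⁻¹ := by rw [Matrix.coe_units_inv, hu]
  simp [huinv, ContinuousLinearMap.mulLeftRight_apply] at h2
  exact h2

theorem entry_deriv' {f : ℝ → Matrix N N ℝ} {f' : Matrix N N ℝ} {x : ℝ}
    (hf : HasDerivAt f f' x) (p q : N) :
    HasDerivAt (fun t => f t p q) (f' p q) x := by
  let L0 : Matrix N N ℝ →ₗ[ℝ] ℝ :=
    { toFun := fun M => M p q
      map_add' := by intro a b; simp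
      map_smul' := by intro c a; simp }
  have := L0.toContinuousLinearMap.hasFDerivAt.comp_hasDerivAt x hf
  exact this

end


private theorem claimA_aux (n m d : ℕ) (Sp : Matrix (Fin m) (Fin n) ℝ)
    (H : Matrix (Fin d) (Fin m) ℝ) (y : Fin n × Fin d → ℝ) :
    (fun ji : Fin n × Fin d => (H * Sp) ji.2 ji.1) ⬝ᵥ y
      = Matrix.trace ((Matrix.of fun (a : Fin d) (i : Fin n) => y (i, a)) * Spᵀ * Hᵀ) := by
  simp only [Matrix.trace, Matrix.diag, Matrix.mul_apply, dotProduct, Matrix.of_apply,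
    Matrix.transpose_apply, Fintype.sum_prod_type, Finset.sum_mul, Finset.mul_sum]
  rw [Finset.sum_comm]
  apply Finset.sum_congr rfl; intro i _
  rw [Finset.sum_comm]
  apply Finset.sum_congr rfl; intro a _
  exact Finset.sum_congr rfl fun _ _ => by ring

private theorem claimB_aux (n m d : ℕ) (V : Matrix (Fin n × Fin m) (Fin n × Fin m) ℝ)
    (hVsym : Vᵀ = V) (R₀ H : Matrix (Fin d) (Fin m) ℝ) (y : Fin n × Fin d → ℝ) :
    y ⬝ᵥ ((((1 : Matrix (Fin n) (Fin n) ℝ) ⊗ₖ H) * V * ((1 : Matrix (Fin n) (Fin n) ℝ) ⊗ₖ R₀ᵀ)) *ᵥ y)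
      = ∑ i : Fin n, ∑ j : Fin n,
          Matrix.trace (Matrix.vecMulVec (fun a : Fin d => y (j, a)) (fun a : Fin d => y (i, a))
            * R₀ * (Matrix.of fun a b => V ((i, a)) ((j, b))) * Hᵀ) := by
  have hV : ∀ pq rs, V pq rs = V rs pq := by
    intro pq rs; conv_lhs => rw [← hVsym]
    rfl
  have hAentry : ∀ p q : Fin n × Fin d,
      ((((1 : Matrix (Fin n) (Fin n) ℝ) ⊗ₖ H) * V * ((1 : Matrix (Fin n) (Fin n) ℝ) ⊗ₖ R₀ᵀ))) p q
        = ∑ e : Fin m, ∑ c : Fin m, H p.2 c * V (p.1, c) (q.1, e) * R₀ q.2 e := by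
    intro p q
    simp [Matrix.mul_apply, Matrix.kroneckerMap_apply, Matrix.one_apply, Fintype.sum_prod_type,
      ite_mul, mul_ite, zero_mul, mul_zero, Finset.sum_ite_eq, Finset.sum_ite_eq',
      Finset.mul_sum, Finset.sum_mul]
  simp only [dotProduct, Matrix.mulVec, hAentry]
  simp only [Matrix.trace, Matrix.diag, Matrix.mul_apply, Matrix.of_apply,
    Matrix.transpose_apply, Matrix.vecMulVec_apply, Fintype.sum_prod_type,
    Finset.sum_mul, Finset.mul_sum]
  trans (∑ x : Fin n × Fin d × Fin n × Fin d × Fin m × Fin m,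
      y (x.1, x.2.1) * (H x.2.1 x.2.2.2.2.2 * V (x.1, x.2.2.2.2.2) (x.2.2.1, x.2.2.2.2.1)
        * R₀ x.2.2.2.1 x.2.2.2.2.1 * y (x.2.2.1, x.2.2.2.1)))
  · simp [Fintype.sum_prod_type]
  trans (∑ z : Fin n × Fin n × Fin d × Fin m × Fin m × Fin d,
      y (z.2.1, z.2.2.1) * y (z.1, z.2.2.2.2.2) * R₀ z.2.2.2.2.2 z.2.2.2.2.1
        * V (z.1, z.2.2.2.2.1) (z.2.1, z.2.2.2.1) * H z.2.2.1 z.2.2.2.1)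
  · refine Fintype.sum_equiv
      ⟨fun x => (x.2.2.1, x.1, x.2.1, x.2.2.2.2.2, x.2.2.2.2.1, x.2.2.2.1),
       fun z => (z.2.1, z.2.2.1, z.1, z.2.2.2.2.2, z.2.2.2.2.1, z.2.2.2.1),
       by rintro ⟨i,a,j,b,e,c⟩; rfl, by rintro ⟨i,j,a,e,c,b⟩; rfl⟩ _ _ ?_
    rintro ⟨i,a,j,b,e,c⟩
    show y (i,a) * (H a c * V (i,c) (j,e) * R₀ b e * y (j,b)) = _
    rw [hV (i,c) (j,e)]
    simp only [Equiv.coe_fn_mk]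
    ring
  · simp [Fintype.sum_prod_type]

attribute [local instance] Matrix.linftyOpNormedRing Matrix.linftyOpNormedAlgebra

/-- Matrix gradient of the variable projection cost function
`f(R) = s(R)ᵀ Γ(R)⁻¹ s(R)`, `s(R) = vec(R S(p̂))`, `Γ(R) = (Iₙ⊗R) V (Iₙ⊗Rᵀ)` with
`V` symmetric: with `y = Γ(R₀)⁻¹ s(R₀)` and `Y` the `d×n` matrix with `vec Y = y`,
the directional derivative of `f` at `R₀` in direction `H` equals
`trace(∇f Hᵀ)` where `∇f = 2 Y S(p̂)ᵀ − 2 ∑_{i,j} y_j y_iᵀ R₀ V^{(i,j)}`. -/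
theorem stmt_19 (m n d : ℕ)
    (Sp : Matrix (Fin m) (Fin n) ℝ)
    (V : Matrix (Fin n × Fin m) (Fin n × Fin m) ℝ)
    (hVsym : Vᵀ = V)
    (R₀ : Matrix (Fin d) (Fin m) ℝ)
    (hinv : IsUnit ((((1 : Matrix (Fin n) (Fin n) ℝ) ⊗ₖ R₀) * V *
        ((1 : Matrix (Fin n) (Fin n) ℝ) ⊗ₖ R₀ᵀ)).det)) :
    ∀ H : Matrix (Fin d) (Fin m) ℝ,
      HasDerivAt
        (fun t : ℝ =>
          (fun R : Matrix (Fin d) (Fin m) ℝ =>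
            (fun ji : Fin n × Fin d => (R * Sp) ji.2 ji.1) ⬝ᵥ
              ((((1 : Matrix (Fin n) (Fin n) ℝ) ⊗ₖ R) * V *
                  ((1 : Matrix (Fin n) (Fin n) ℝ) ⊗ₖ Rᵀ))⁻¹ *ᵥ
                (fun ji : Fin n × Fin d => (R * Sp) ji.2 ji.1)))
            (R₀ + t • H))
        (Matrix.trace
          ((2 •
              ((Matrix.of fun (a : Fin d) (i : Fin n) =>
                  ((((1 : Matrix (Fin n) (Fin n) ℝ) ⊗ₖ R₀) * V *
                      ((1 : Matrix (Fin n) (Fin n) ℝ) ⊗ₖ R₀ᵀ))⁻¹ *ᵥ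
                    (fun ji : Fin n × Fin d => (R₀ * Sp) ji.2 ji.1)) (i, a))
                * Spᵀ)
            - 2 •
              ∑ i : Fin n, ∑ j : Fin n,
                Matrix.vecMulVec
                  (fun a : Fin d =>
                    ((((1 : Matrix (Fin n) (Fin n) ℝ) ⊗ₖ R₀) * V *
                        ((1 : Matrix (Fin n) (Fin n) ℝ) ⊗ₖ R₀ᵀ))⁻¹ *ᵥ
                      (fun ji : Fin n × Fin d => (R₀ * Sp) ji.2 ji.1)) (j, a))
                  (fun a : Fin d =>
                    ((((1 : Matrix (Fin n) (Fin n) ℝ) ⊗ₖ R₀) * V *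
                        ((1 : Matrix (Fin n) (Fin n) ℝ) ⊗ₖ R₀ᵀ))⁻¹ *ᵥ
                      (fun ji : Fin n × Fin d => (R₀ * Sp) ji.2 ji.1)) (i, a))
                  * R₀ * (Matrix.of fun a b => V ((i, a)) ((j, b))))
            * Hᵀ))
        0 := by
  intro H
  -- notation
  set Γ₀ : Matrix (Fin n × Fin d) (Fin n × Fin d) ℝ :=
    ((1 : Matrix (Fin n) (Fin n) ℝ) ⊗ₖ R₀) * V * ((1 : Matrix (Fin n) (Fin n) ℝ) ⊗ₖ R₀ᵀ) with hΓ₀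
  set A : Matrix (Fin n × Fin d) (Fin n × Fin d) ℝ :=
    ((1 : Matrix (Fin n) (Fin n) ℝ) ⊗ₖ H) * V * ((1 : Matrix (Fin n) (Fin n) ℝ) ⊗ₖ R₀ᵀ) with hA
  set B : Matrix (Fin n × Fin d) (Fin n × Fin d) ℝ :=
    ((1 : Matrix (Fin n) (Fin n) ℝ) ⊗ₖ R₀) * V * ((1 : Matrix (Fin n) (Fin n) ℝ) ⊗ₖ Hᵀ) with hB
  set C : Matrix (Fin n × Fin d) (Fin n × Fin d) ℝ :=
    ((1 : Matrix (Fin n) (Fin n) ℝ) ⊗ₖ H) * V * ((1 : Matrix (Fin n) (Fin n) ℝ) ⊗ₖ Hᵀ) with hC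
  set s0 : Fin n × Fin d → ℝ := fun ji => (R₀ * Sp) ji.2 ji.1 with hs0
  set s1 : Fin n × Fin d → ℝ := fun ji => (H * Sp) ji.2 ji.1 with hs1
  set G0 : Matrix (Fin n × Fin d) (Fin n × Fin d) ℝ := Γ₀⁻¹ with hG0
  set G' : Matrix (Fin n × Fin d) (Fin n × Fin d) ℝ := -(G0 * (A + B) * G0) with hG'
  -- function equality
  have hfun : (fun t : ℝ =>
      (fun R : Matrix (Fin d) (Fin m) ℝ =>
        (fun ji : Fin n × Fin d => (R * Sp) ji.2 ji.1) ⬝ᵥ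
          ((((1 : Matrix (Fin n) (Fin n) ℝ) ⊗ₖ R) * V *
              ((1 : Matrix (Fin n) (Fin n) ℝ) ⊗ₖ Rᵀ))⁻¹ *ᵥ
            (fun ji : Fin n × Fin d => (R * Sp) ji.2 ji.1)))
        (R₀ + t • H))
      = fun t : ℝ => ∑ p : Fin n × Fin d, (s0 p + t * s1 p) *
          ∑ q : Fin n × Fin d,
            (Ring.inverse (Γ₀ + t • (A + B) + (t * t) • C)) p q * (s0 q + t * s1 q) := by
    funext t
    have hΓt : (((1 : Matrix (Fin n) (Fin n) ℝ) ⊗ₖ (R₀ + t • H)) * V *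
        ((1 : Matrix (Fin n) (Fin n) ℝ) ⊗ₖ (R₀ + t • H)ᵀ)) = Γ₀ + t • (A + B) + (t * t) • C := by
      rw [hΓ₀, hA, hB, hC]
      simp only [transpose_add, transpose_smul, Matrix.kronecker_add, Matrix.kronecker_smul,
        Matrix.add_mul, Matrix.mul_add, Matrix.smul_mul, Matrix.mul_smul, smul_add, smul_smul]
      abel
    have hst : ∀ ji : Fin n × Fin d, ((R₀ + t • H) * Sp) ji.2 ji.1
        = s0 ji + t * s1 ji := by
      intro ji
      rw [hs0, hs1]
      simp [Matrix.add_mul, Matrix.smul_mul]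
    simp only [hΓt, Matrix.nonsing_inv_eq_ringInverse, dotProduct, Matrix.mulVec, hst]
  rw [hfun]
  -- the natural derivative
  have hdet : IsUnit Γ₀.det := hinv
  have hGd : HasDerivAt (fun t : ℝ => Ring.inverse (Γ₀ + t • (A + B) + (t * t) • C)) G' 0 := by
    rw [hG', hG0]; exact inv_deriv' Γ₀ (A + B) C hdet
  have hG0entry : Ring.inverse Γ₀ = G0 := by
    rw [hG0, Matrix.nonsing_inv_eq_ringInverse]
  have key : HasDerivAt (fun t : ℝ => ∑ p : Fin n × Fin d, (s0 p + t * s1 p) *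
        ∑ q : Fin n × Fin d,
          (Ring.inverse (Γ₀ + t • (A + B) + (t * t) • C)) p q * (s0 q + t * s1 q))
      (∑ p : Fin n × Fin d,
        (s1 p * ∑ q, G0 p q * s0 q
          + s0 p * ∑ q, (G' p q * s0 q + G0 p q * s1 q))) 0 := by
    apply HasDerivAt.fun_sum
    intro p _
    have ha : HasDerivAt (fun t : ℝ => s0 p + t * s1 p) (s1 p) 0 := by
      simpa using (hasDerivAt_const (0:ℝ) (s0 p)).fun_add ((hasDerivAt_id (0:ℝ)).mul_const (s1 p))
    have hb : HasDerivAt (fun t : ℝ => ∑ q : Fin n × Fin d,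
          (Ring.inverse (Γ₀ + t • (A + B) + (t * t) • C)) p q * (s0 q + t * s1 q))
        (∑ q, (G' p q * s0 q + G0 p q * s1 q)) 0 := by
      apply HasDerivAt.fun_sum
      intro q _
      have hq : HasDerivAt (fun t : ℝ => s0 q + t * s1 q) (s1 q) 0 := by
        simpa using (hasDerivAt_const (0:ℝ) (s0 q)).fun_add ((hasDerivAt_id (0:ℝ)).mul_const (s1 q))
      have he := (entry_deriv' hGd p q).fun_mul hq
      simpa [hG0entry] using he
    have := ha.fun_mul hb
    simpa [hG0entry] using this
  -- identify the derivative value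
  have halg : (∑ p : Fin n × Fin d,
        (s1 p * ∑ q, G0 p q * s0 q
          + s0 p * ∑ q, (G' p q * s0 q + G0 p q * s1 q)))
      = (Matrix.trace
          ((2 • ((Matrix.of fun (a : Fin d) (i : Fin n) => (G0 *ᵥ s0) (i, a)) * Spᵀ)
            - 2 • ∑ i : Fin n, ∑ j : Fin n,
                Matrix.vecMulVec (fun a : Fin d => (G0 *ᵥ s0) (j, a))
                  (fun a : Fin d => (G0 *ᵥ s0) (i, a))
                  * R₀ * (Matrix.of fun a b => V ((i, a)) ((j, b))))
            * Hᵀ)) := by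
    have hΓsym : Γ₀ᵀ = Γ₀ := by
      rw [hΓ₀]
      simp [Matrix.transpose_mul, ← Matrix.kroneckerMap_transpose, Matrix.transpose_one, hVsym,
        Matrix.mul_assoc]
    have hG0sym : G0ᵀ = G0 := by
      rw [hG0, Matrix.transpose_nonsing_inv, hΓsym]
    have hBA : Bᵀ = A := by
      rw [hA, hB]
      simp [Matrix.transpose_mul, ← Matrix.kroneckerMap_transpose, Matrix.transpose_one, hVsym,
        Matrix.mul_assoc]
    have hy : s0 ᵥ* G0 = G0 *ᵥ s0 := by
      conv_lhs => rw [← hG0sym]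
      rw [Matrix.vecMul_transpose]
    -- step 1: rewrite LHS via dot products
    have h0 : (∑ p : Fin n × Fin d,
          (s1 p * ∑ q, G0 p q * s0 q
            + s0 p * ∑ q, (G' p q * s0 q + G0 p q * s1 q)))
        = s1 ⬝ᵥ (G0 *ᵥ s0) + (s0 ⬝ᵥ (G' *ᵥ s0) + s0 ⬝ᵥ (G0 *ᵥ s1)) := by
      simp only [dotProduct, Matrix.mulVec, ← Finset.sum_add_distrib]
      refine Finset.sum_congr rfl fun p _ => ?_
      rw [Finset.sum_add_distrib, mul_add]
    have e1 : s0 ⬝ᵥ (G0 *ᵥ s1) = s1 ⬝ᵥ (G0 *ᵥ s0) := by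
      rw [Matrix.dotProduct_mulVec, hy, dotProduct_comm]
    have e2 : s0 ⬝ᵥ (G' *ᵥ s0)
        = -(2 * ((G0 *ᵥ s0) ⬝ᵥ (A *ᵥ (G0 *ᵥ s0)))) := by
      rw [hG', Matrix.neg_mulVec, dotProduct_neg, neg_inj]
      rw [← Matrix.mulVec_mulVec s0 (G0 * (A + B)) G0,
        ← Matrix.mulVec_mulVec (G0 *ᵥ s0) G0 (A + B),
        Matrix.dotProduct_mulVec, hy]
      rw [Matrix.add_mulVec, dotProduct_add]
      have e3 : (G0 *ᵥ s0) ⬝ᵥ (B *ᵥ (G0 *ᵥ s0)) = (G0 *ᵥ s0) ⬝ᵥ (A *ᵥ (G0 *ᵥ s0)) := by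
        conv_rhs => rw [← hBA, Matrix.mulVec_transpose]
        rw [Matrix.dotProduct_mulVec, dotProduct_comm]
      rw [e3]; ring
    -- step 2: rewrite RHS trace
    have hR : (Matrix.trace
          ((2 • ((Matrix.of fun (a : Fin d) (i : Fin n) => (G0 *ᵥ s0) (i, a)) * Spᵀ)
            - 2 • ∑ i : Fin n, ∑ j : Fin n,
                Matrix.vecMulVec (fun a : Fin d => (G0 *ᵥ s0) (j, a))
                  (fun a : Fin d => (G0 *ᵥ s0) (i, a))
                  * R₀ * (Matrix.of fun a b => V ((i, a)) ((j, b))))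
            * Hᵀ))
        = 2 * Matrix.trace ((Matrix.of fun (a : Fin d) (i : Fin n) => (G0 *ᵥ s0) (i, a)) * Spᵀ * Hᵀ)
          - 2 * ∑ i : Fin n, ∑ j : Fin n,
              Matrix.trace (Matrix.vecMulVec (fun a : Fin d => (G0 *ᵥ s0) (j, a))
                (fun a : Fin d => (G0 *ᵥ s0) (i, a))
                * R₀ * (Matrix.of fun a b => V ((i, a)) ((j, b))) * Hᵀ) := by
      simp only [two_smul, Matrix.sub_mul, Matrix.add_mul, Matrix.trace_sub, Matrix.trace_add,
        Matrix.sum_mul, Matrix.trace_sum]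
      ring
    have hca := claimA_aux n m d Sp H (G0 *ᵥ s0)
    have hcb := claimB_aux n m d V hVsym R₀ H (G0 *ᵥ s0)
    rw [h0, e1, e2, hR, ← hca, ← hcb, hs1]
    ring
  exact halg ▸ key
end
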